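/- For k ∈ (0,1), the complete elliptic integrals satisfy √(1−k²)·K(k) < E(k) < ((1+√(1−k²))/2)² · K(k). -/

import Mathlib

open Real

/-- The complete elliptic integral of the first kind. -/
noncomputable def ellipticK (k : ℝ) : ℝ :=
  ∫ θ in (0:ℝ)..(π / 2), 1 / Real.sqrt (1 - k ^ 2 * Real.sin θ ^ 2)

/-- The complete elliptic integral of the second kind. -/
noncomputable def ellipticE (k : ℝ) : ℝ :=
  ∫ θ in (0:ℝ)..(π / 2), Real.sqrt (1 - k ^ 2 * Real.sin θ ^ 2)

/-!
Write `Δ(θ) = √(1 - k² sin² θ)` and `k' = √(1 - k²)`.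

Lower bound: pair `θ` with `π/2 - θ`. Since `(Δ(θ) Δ(π/2 - θ))² = k'² + k⁴ sin² θ cos² θ > k'²`,
the symmetrised integrand of `E - k' K`, namely `(Δ(θ) + Δ(π/2 - θ)) (1 - k' / (Δ(θ) Δ(π/2 - θ)))`,
is positive.

Upper bound: the Gauss–Landen substitution `sin φ = (1 + m) sin θ / (1 + m sin² θ)` with
`m = (1 - k') / (1 + k')`, i.e. `k = 2√m / (1 + m)`, gives `K(k) = (1 + m) K(m)` and
`(1 + m) E(k) = 2 E(m) - (1 - m²) K(m)`. Integrating the derivative of `sin θ cos θ / Δ(θ)` shows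
`E(m) < (1 - m²/2) K(m)`, hence `(1 + m) E(k) < K(m) = K(k) / (1 + m)`, which is the claim because
`1 / (1 + m)² = ((1 + k') / 2)²`.
-/

open intervalIntegral Set

noncomputable def ellipticDelta (k θ : ℝ) : ℝ := √(1 - k ^ 2 * sin θ ^ 2)

section ellipticDelta

variable {k : ℝ}

lemma one_sub_sq_mul_sin_sq_pos (hk : k ^ 2 < 1) (θ : ℝ) : 0 < 1 - k ^ 2 * sin θ ^ 2 := by
  nlinarith [sin_sq_le_one θ, sq_nonneg k]

lemma ellipticDelta_pos (hk : k ^ 2 < 1) (θ : ℝ) : 0 < ellipticDelta k θ :=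
  sqrt_pos.2 (one_sub_sq_mul_sin_sq_pos hk θ)

lemma ellipticDelta_sq (hk : k ^ 2 < 1) (θ : ℝ) :
    ellipticDelta k θ ^ 2 = 1 - k ^ 2 * sin θ ^ 2 :=
  sq_sqrt (one_sub_sq_mul_sin_sq_pos hk θ).le

@[fun_prop]
lemma continuous_ellipticDelta (k : ℝ) : Continuous (ellipticDelta k) := by
  unfold ellipticDelta
  fun_prop

lemma continuous_inv_ellipticDelta (hk : k ^ 2 < 1) :
    Continuous fun θ => 1 / ellipticDelta k θ :=
  continuous_const.div (continuous_ellipticDelta k) fun θ => (ellipticDelta_pos hk θ).ne'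

lemma hasDerivAt_ellipticDelta (hk : k ^ 2 < 1) (θ : ℝ) :
    HasDerivAt (ellipticDelta k) (-(k ^ 2 * sin θ * cos θ) / ellipticDelta k θ) θ := by
  have h := ((((hasDerivAt_sin θ).fun_pow 2).const_mul (k ^ 2)).const_sub 1).sqrt
    (one_sub_sq_mul_sin_sq_pos hk θ).ne'
  refine h.congr_deriv ?_
  unfold ellipticDelta
  field_simp
  ring

lemma integral_mul_ellipticDelta_sub_div (hk : k ^ 2 < 1) (a b : ℝ) :
    ∫ θ in (0)..(π / 2), (a * ellipticDelta k θ - b / ellipticDelta k θ) =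
      a * ellipticE k - b * ellipticK k := by
  simp_rw [div_eq_mul_one_div b]
  rw [integral_sub, integral_const_mul, integral_const_mul]
  · rfl
  · exact ((continuous_ellipticDelta k).const_mul a).intervalIntegrable _ _
  · exact ((continuous_inv_ellipticDelta hk).const_mul b).intervalIntegrable _ _

end ellipticDelta

lemma integral_pos_of_add_comp_sub_pos {a : ℝ} (ha : 0 < a) {f : ℝ → ℝ} (hf : Continuous f)
    (h : ∀ x ∈ Ioo 0 a, 0 < f x + f (a - x)) : 0 < ∫ x in (0)..a, f x := by
  have hrefl : Continuous fun x => f (a - x) := hf.comp (continuous_sub_left a)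
  have hsum := intervalIntegral_pos_of_pos_on (f := fun x => f x + f (a - x))
    ((hf.add hrefl).intervalIntegrable 0 a) h ha
  rw [integral_add (hf.intervalIntegrable _ _) (hrefl.intervalIntegrable _ _),
    integral_comp_sub_left, sub_self, sub_zero] at hsum
  linarith

lemma sub_div_add_sub_div_pos {a b q : ℝ} (ha : 0 < a) (hb : 0 < b) (hq : q < a * b) :
    0 < a - q / a + (b - q / b) := by
  have h : a - q / a + (b - q / b) = (a + b) * (a * b - q) / (a * b) := by
    field_simp
    ring
  rw [h]
  exact div_pos (mul_pos (add_pos ha hb) (sub_pos.2 hq)) (mul_pos ha hb)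

section bounds

variable {k : ℝ}

lemma sqrt_one_sub_sq_lt_ellipticDelta_mul (hk0 : k ≠ 0) (hk : k ^ 2 < 1) {θ : ℝ}
    (hθ : θ ∈ Ioo 0 (π / 2)) :
    √(1 - k ^ 2) < ellipticDelta k θ * ellipticDelta k (π / 2 - θ) := by
  have hs : 0 < sin θ := sin_pos_of_pos_of_lt_pi hθ.1 (by linarith [hθ.2, pi_pos])
  have hc : 0 < cos θ := cos_pos_of_mem_Ioo ⟨by linarith [hθ.1, pi_pos], hθ.2⟩
  have hprod : (ellipticDelta k θ * ellipticDelta k (π / 2 - θ)) ^ 2 =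
      1 - k ^ 2 + k ^ 4 * sin θ ^ 2 * cos θ ^ 2 := by
    rw [mul_pow, ellipticDelta_sq hk, ellipticDelta_sq hk, sin_pi_div_two_sub]
    linear_combination (-k ^ 2) * sin_sq_add_cos_sq θ
  rw [← sqrt_sq (mul_pos (ellipticDelta_pos hk θ) (ellipticDelta_pos hk _)).le, hprod]
  apply sqrt_lt_sqrt (by nlinarith)
  have : 0 < k ^ 4 * sin θ ^ 2 * cos θ ^ 2 := by positivity
  linarith

theorem sqrt_one_sub_sq_mul_ellipticK_lt_ellipticE (hk0 : k ≠ 0) (hk : k ^ 2 < 1) :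
    √(1 - k ^ 2) * ellipticK k < ellipticE k := by
  have hΔ := ellipticDelta_pos hk
  suffices h : 0 < ∫ θ in (0)..(π / 2),
      (1 * ellipticDelta k θ - √(1 - k ^ 2) / ellipticDelta k θ) by
    rw [integral_mul_ellipticDelta_sub_div hk] at h
    linarith
  refine integral_pos_of_add_comp_sub_pos (by positivity)
    (by fun_prop (disch := exact fun θ => (hΔ θ).ne')) fun θ hθ => ?_
  simpa only [one_mul] using sub_div_add_sub_div_pos (hΔ θ) (hΔ (π / 2 - θ))
    (sqrt_one_sub_sq_lt_ellipticDelta_mul hk0 hk hθ)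

lemma hasDerivAt_sin_mul_cos_div_ellipticDelta (hk : k ^ 2 < 1) (θ : ℝ) :
    HasDerivAt (fun t => sin t * cos t / ellipticDelta k t)
      ((cos θ ^ 2 - sin θ ^ 2) / ellipticDelta k θ +
        k ^ 2 * sin θ ^ 2 * cos θ ^ 2 / ellipticDelta k θ ^ 3) θ := by
  have hΔ := (ellipticDelta_pos hk θ).ne'
  refine (((hasDerivAt_sin θ).fun_mul (hasDerivAt_cos θ)).div (hasDerivAt_ellipticDelta hk θ)
    hΔ).congr_deriv ?_
  field_simp
  ring

theorem ellipticE_lt_mul_ellipticK (hk0 : k ≠ 0) (hk : k ^ 2 < 1) :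
    ellipticE k < (1 - k ^ 2 / 2) * ellipticK k := by
  have hΔ := ellipticDelta_pos hk
  set R : ℝ → ℝ := fun θ => sin θ ^ 2 * cos θ ^ 2 / ellipticDelta k θ ^ 3
  set D : ℝ → ℝ := fun θ => (cos θ ^ 2 - sin θ ^ 2) / ellipticDelta k θ +
    k ^ 2 * sin θ ^ 2 * cos θ ^ 2 / ellipticDelta k θ ^ 3
  have hR_cont : Continuous R := by fun_prop (disch := exact fun θ => pow_ne_zero 3 (hΔ θ).ne')
  have hD_cont : Continuous D := by
    fun_prop (disch := first | exact fun θ => (hΔ θ).ne' | exact fun θ => pow_ne_zero 3 (hΔ θ).ne')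
  have hD : ∫ θ in (0)..(π / 2), D θ = 0 := by
    rw [integral_eq_sub_of_hasDerivAt (fun θ _ => hasDerivAt_sin_mul_cos_div_ellipticDelta hk θ)
      (hD_cont.intervalIntegrable _ _)]
    simp
  have hR : 0 < ∫ θ in (0)..(π / 2), R θ := by
    refine intervalIntegral_pos_of_pos_on (hR_cont.intervalIntegrable _ _) (fun θ hθ => ?_)
      (by positivity)
    have hs : 0 < sin θ := sin_pos_of_pos_of_lt_pi hθ.1 (by linarith [hθ.2, pi_pos])
    have hc : 0 < cos θ := cos_pos_of_mem_Ioo ⟨by linarith [hθ.1, pi_pos], hθ.2⟩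
    have := hΔ θ
    positivity
  have hpoint : ∀ θ, 1 * ellipticDelta k θ - (1 - k ^ 2 / 2) / ellipticDelta k θ =
      k ^ 2 / 2 * D θ - k ^ 4 / 2 * R θ := by
    intro θ
    have := (hΔ θ).ne'
    simp only [D, R]
    field_simp
    linear_combination (2 * ellipticDelta k θ ^ 2) * ellipticDelta_sq hk θ
      - (k ^ 2 * ellipticDelta k θ ^ 2) * sin_sq_add_cos_sq θ
  have h := integral_mul_ellipticDelta_sub_div hk 1 (1 - k ^ 2 / 2)
  rw [integral_congr fun θ _ => hpoint θ, integral_sub, integral_const_mul, integral_const_mul,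
    hD] at h
  · have : 0 < k ^ 4 := by positivity
    nlinarith
  · exact (hD_cont.const_mul _).intervalIntegrable _ _
  · exact (hR_cont.const_mul _).intervalIntegrable _ _

end bounds

noncomputable def landen (m θ : ℝ) : ℝ := arcsin ((1 + m) * sin θ / (1 + m * sin θ ^ 2))

noncomputable def landenDeriv (m θ : ℝ) : ℝ :=
  (1 + m) * (1 - m * sin θ ^ 2) / ((1 + m * sin θ ^ 2) * ellipticDelta m θ)

section landen

variable {m : ℝ}

lemma one_add_mul_sin_sq_pos (hm0 : 0 ≤ m) (θ : ℝ) : 0 < 1 + m * sin θ ^ 2 := by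
  positivity

lemma one_sub_mul_sin_sq_pos (hm0 : 0 ≤ m) (hm1 : m < 1) (θ : ℝ) : 0 < 1 - m * sin θ ^ 2 := by
  nlinarith [mul_le_mul_of_nonneg_left (sin_sq_le_one θ) hm0]

lemma abs_landen_arg_le_one (hm0 : 0 ≤ m) (hm1 : m ≤ 1) (θ : ℝ) :
    |(1 + m) * sin θ / (1 + m * sin θ ^ 2)| ≤ 1 := by
  have hden := one_add_mul_sin_sq_pos hm0 θ
  rw [abs_div, abs_of_pos hden, div_le_one hden,
    abs_mul, abs_of_nonneg (by linarith : 0 ≤ 1 + m), ← sq_abs (sin θ)]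
  nlinarith [abs_nonneg (sin θ), abs_sin_le_one θ, mul_nonneg (sub_nonneg.2 (abs_sin_le_one θ))
    (sub_nonneg.2 (mul_le_one₀ hm1 (abs_nonneg _) (abs_sin_le_one θ)))]

lemma sin_landen (hm0 : 0 ≤ m) (hm1 : m ≤ 1) (θ : ℝ) :
    sin (landen m θ) = (1 + m) * sin θ / (1 + m * sin θ ^ 2) :=
  have h := abs_le.1 (abs_landen_arg_le_one hm0 hm1 θ)
  sin_arcsin h.1 h.2

lemma landen_zero : landen m 0 = 0 := by
  simp [landen]

lemma landen_pi_div_two (hm0 : 0 ≤ m) : landen m (π / 2) = π / 2 := by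
  have : 1 + m ≠ 0 := by positivity
  simp [landen, this]

lemma ellipticDelta_landen {k : ℝ} (hm0 : 0 ≤ m) (hm1 : m < 1) (hkm : k ^ 2 * (1 + m) ^ 2 = 4 * m)
    (θ : ℝ) :
    ellipticDelta k (landen m θ) = (1 - m * sin θ ^ 2) / (1 + m * sin θ ^ 2) := by
  have hden := one_add_mul_sin_sq_pos hm0 θ
  rw [ellipticDelta, sin_landen hm0 hm1.le, ← sqrt_sq
    (div_pos (one_sub_mul_sin_sq_pos hm0 hm1 θ) hden).le]
  congr 1
  field_simp
  linear_combination (- sin θ ^ 2) * hkm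

lemma hasDerivAt_landen (hm0 : 0 ≤ m) (hm1 : m < 1) {θ : ℝ} (hθ : θ ∈ Ioo 0 (π / 2)) :
    HasDerivAt (landen m) (landenDeriv m θ) θ := by
  have hs : 0 < sin θ := sin_pos_of_pos_of_lt_pi hθ.1 (by linarith [hθ.2, pi_pos])
  have hc : 0 < cos θ := cos_pos_of_mem_Ioo ⟨by linarith [hθ.1, pi_pos], hθ.2⟩
  have hs1 : sin θ < 1 := by nlinarith [sin_sq_add_cos_sq θ]
  have hden := one_add_mul_sin_sq_pos hm0 θ
  have hm2 : m ^ 2 < 1 := by nlinarith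
  have hΔ := ellipticDelta_pos hm2 θ
  have hu0 : 0 < (1 + m) * sin θ / (1 + m * sin θ ^ 2) := by positivity
  have hu1 : (1 + m) * sin θ / (1 + m * sin θ ^ 2) < 1 := by
    rw [div_lt_one hden]
    nlinarith [mul_pos (sub_pos.2 hs1) (sub_pos.2 (show m * sin θ < 1 by nlinarith))]
  have hsqrt : √(1 - ((1 + m) * sin θ / (1 + m * sin θ ^ 2)) ^ 2) =
      cos θ * ellipticDelta m θ / (1 + m * sin θ ^ 2) := by
    rw [← sqrt_sq (by positivity : 0 ≤ cos θ * ellipticDelta m θ / (1 + m * sin θ ^ 2))]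
    congr 1
    field_simp
    linear_combination (-cos θ ^ 2) * ellipticDelta_sq hm2 θ
      - (1 - m ^ 2 * sin θ ^ 2) * sin_sq_add_cos_sq θ
  have hu := ((hasDerivAt_sin θ).const_mul (1 + m)).div
    ((((hasDerivAt_sin θ).fun_pow 2).const_mul m).const_add 1) hden.ne'
  refine ((hasDerivAt_arcsin (by linarith) hu1.ne).comp θ hu).congr_deriv ?_
  rw [hsqrt, landenDeriv]
  field_simp
  ring

lemma continuous_landenDeriv (hm0 : 0 ≤ m) (hm1 : m < 1) : Continuous (landenDeriv m) := by
  have hΔ := ellipticDelta_pos (k := m) (by nlinarith)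
  unfold landenDeriv
  fun_prop (disch := exact fun θ => (mul_pos (one_add_mul_sin_sq_pos hm0 θ) (hΔ θ)).ne')

lemma integral_comp_landen_mul_landenDeriv (hm0 : 0 ≤ m) (hm1 : m < 1) {g : ℝ → ℝ}
    (hg : Continuous g) :
    ∫ θ in (0)..(π / 2), g (landen m θ) * landenDeriv m θ = ∫ φ in (0)..(π / 2), g φ := by
  have hpi : (0 : ℝ) ≤ π / 2 := by positivity
  have hlanden : Continuous (landen m) := by
    unfold landen
    fun_prop (disch := exact fun θ => (one_add_mul_sin_sq_pos hm0 θ).ne')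
  have h := integral_comp_mul_deriv'' hlanden.continuousOn
    (fun θ hθ => (hasDerivAt_landen hm0 hm1
      (by rwa [min_eq_left hpi, max_eq_right hpi] at hθ)).hasDerivWithinAt)
    (continuous_landenDeriv hm0 hm1).continuousOn hg.continuousOn
  rwa [landen_zero, landen_pi_div_two hm0] at h

end landen

section gauss

variable {k m : ℝ}

lemma sq_lt_one_of_landen (hm1 : m < 1) (hkm : k ^ 2 * (1 + m) ^ 2 = 4 * m) :
    k ^ 2 < 1 := by
  nlinarith [sq_pos_of_pos (sub_pos.2 hm1)]

theorem ellipticK_eq_of_landen (hm0 : 0 ≤ m) (hm1 : m < 1) (hkm : k ^ 2 * (1 + m) ^ 2 = 4 * m) :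
    ellipticK k = (1 + m) * ellipticK m := by
  have hk := sq_lt_one_of_landen hm1 hkm
  calc ellipticK k
      = ∫ θ in (0)..(π / 2), 1 / ellipticDelta k (landen m θ) * landenDeriv m θ :=
        (integral_comp_landen_mul_landenDeriv hm0 hm1 (continuous_inv_ellipticDelta hk)).symm
    _ = ∫ θ in (0)..(π / 2), (1 + m) * (1 / ellipticDelta m θ) := by
        refine integral_congr fun θ _ => ?_
        have := one_sub_mul_sin_sq_pos hm0 hm1 θ
        rw [ellipticDelta_landen hm0 hm1 hkm, landenDeriv]
        field_simp
    _ = (1 + m) * ellipticK m := integral_const_mul _ _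

/-- Antiderivative of `(1 + m) Δₖ(landen m θ) · landenDeriv m θ - (2 Δₘ(θ) - (1 - m²) / Δₘ(θ))`,
where `k = 2√m / (1 + m)`. -/
lemma hasDerivAt_landen_antideriv (hm0 : 0 ≤ m) (hm1 : m < 1) (θ : ℝ) :
    HasDerivAt (fun t => 2 * m * sin t * cos t * ellipticDelta m t / (1 + m * sin t ^ 2))
      ((1 + m) ^ 2 * (1 - m * sin θ ^ 2) ^ 2 / ((1 + m * sin θ ^ 2) ^ 2 * ellipticDelta m θ)
        - 2 * ellipticDelta m θ + (1 - m ^ 2) / ellipticDelta m θ) θ := by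
  have hm : m ^ 2 < 1 := by nlinarith
  have hΔ := (ellipticDelta_pos hm θ).ne'
  have hden := (one_add_mul_sin_sq_pos hm0 θ).ne'
  refine (((((hasDerivAt_sin θ).const_mul (2 * m)).fun_mul (hasDerivAt_cos θ)).fun_mul
    (hasDerivAt_ellipticDelta hm θ)).div ((((hasDerivAt_sin θ).fun_pow 2).const_mul m).const_add 1)
    hden).congr_deriv ?_
  field_simp
  rw [ellipticDelta_sq hm, cos_sq']
  norm_num
  ring

theorem one_add_mul_ellipticE_eq_of_landen (hm0 : 0 ≤ m) (hm1 : m < 1)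
    (hkm : k ^ 2 * (1 + m) ^ 2 = 4 * m) :
    (1 + m) * ellipticE k = 2 * ellipticE m - (1 - m ^ 2) * ellipticK m := by
  have hk := sq_lt_one_of_landen hm1 hkm
  have hm : m ^ 2 < 1 := by nlinarith
  have hΔ := ellipticDelta_pos hm
  have hden := one_add_mul_sin_sq_pos hm0
  set H : ℝ → ℝ := fun θ => (1 + m) ^ 2 * (1 - m * sin θ ^ 2) ^ 2 /
    ((1 + m * sin θ ^ 2) ^ 2 * ellipticDelta m θ) - 2 * ellipticDelta m θ +
      (1 - m ^ 2) / ellipticDelta m θ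
  have hH_cont : Continuous H := by
    fun_prop (disch := first
      | exact fun θ => (hΔ θ).ne'
      | exact fun θ => (mul_pos (pow_pos (hden θ) 2) (hΔ θ)).ne')
  have hH : ∫ θ in (0)..(π / 2), H θ = 0 := by
    rw [integral_eq_sub_of_hasDerivAt (fun θ _ => hasDerivAt_landen_antideriv hm0 hm1 θ)
      (hH_cont.intervalIntegrable _ _)]
    simp
  calc (1 + m) * ellipticE k
      = (1 + m) * ∫ θ in (0)..(π / 2), ellipticDelta k (landen m θ) * landenDeriv m θ := by
        rw [integral_comp_landen_mul_landenDeriv hm0 hm1 (continuous_ellipticDelta k)]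
        rfl
    _ = ∫ θ in (0)..(π / 2), (H θ + (2 * ellipticDelta m θ - (1 - m ^ 2) / ellipticDelta m θ)) := by
        rw [← integral_const_mul]
        refine integral_congr fun θ _ => ?_
        have := (hΔ θ).ne'
        have := (hden θ).ne'
        simp only [H, ellipticDelta_landen hm0 hm1 hkm, landenDeriv]
        field_simp
        ring
    _ = 2 * ellipticE m - (1 - m ^ 2) * ellipticK m := by
        rw [integral_add (hH_cont.intervalIntegrable _ _), hH, zero_add,
          integral_mul_ellipticDelta_sub_div hm]
        exact Continuous.intervalIntegrable
          (by fun_prop (disch := exact fun θ => (hΔ θ).ne')) _ _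

end gauss

theorem ellipticE_lt_sq_mul_ellipticK {k : ℝ} (hk0 : k ≠ 0) (hk : k ^ 2 < 1) :
    ellipticE k < ((1 + √(1 - k ^ 2)) / 2) ^ 2 * ellipticK k := by
  set q := √(1 - k ^ 2)
  have hq0 : 0 < q := sqrt_pos.2 (by linarith)
  have hq2 : q ^ 2 = 1 - k ^ 2 := sq_sqrt (by linarith)
  have hq1 : q < 1 := by nlinarith [sq_pos_of_ne_zero hk0]
  set m := (1 - q) / (1 + q)
  have hm0 : 0 < m := div_pos (by linarith) (by linarith)
  have hm1 : m < 1 := (div_lt_one (by linarith)).2 (by linarith)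
  have h1m : 1 + m = 2 / (1 + q) := by
    simp only [m]
    field_simp
    ring
  have hkm : k ^ 2 * (1 + m) ^ 2 = 4 * m := by
    rw [h1m]
    simp only [m]
    field_simp
    linear_combination 4 * hq2
  have hE := one_add_mul_ellipticE_eq_of_landen hm0.le hm1 hkm
  have hlt := ellipticE_lt_mul_ellipticK hm0.ne' (by nlinarith)
  calc ellipticE k < ellipticK m / (1 + m) := by
        rw [lt_div_iff₀ (by linarith), mul_comm]
        linarith
    _ = ((1 + q) / 2) ^ 2 * ellipticK k := by
        rw [ellipticK_eq_of_landen hm0.le hm1 hkm, h1m]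
        field_simp

theorem elliptic_E_bounds (k : ℝ) (hk : k ∈ Set.Ioo (0:ℝ) 1) :
    Real.sqrt (1 - k ^ 2) * ellipticK k < ellipticE k ∧
      ellipticE k < ((1 + Real.sqrt (1 - k ^ 2)) / 2) ^ 2 * ellipticK k := by
  have hk0 : k ≠ 0 := hk.1.ne'
  have hk1 : k ^ 2 < 1 := by nlinarith [hk.1, hk.2]
  exact ⟨sqrt_one_sub_sq_mul_ellipticK_lt_ellipticE hk0 hk1, ellipticE_lt_sq_mul_ellipticK hk0 hk1⟩
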